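/- If A has a bounded weak approximate identity and C_BSE(Δ(A)) is a two-sided ideal of C_b(Δ(A)), then Δ(C_BSE(Δ(A))) equals the weak-* closure of Δ(A) in A*. -/

import Mathlib

open WeakDual Filter

variable {A : Type*} [NonUnitalNormedCommRing A] [NormedSpace ℂ A]
  [IsScalarTower ℂ A A] [SMulCommClass ℂ A A] [CompleteSpace A]

/-- The BSE inequality for a function on the character space of `A`. -/
def IsBSE (σ : WeakDual.characterSpace ℂ A → ℂ) : Prop :=
  ∃ C > (0 : ℝ), ∀ (n : ℕ) (φ : Fin n → WeakDual.characterSpace ℂ A) (c : Fin n → ℂ),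
    ‖∑ i, c i * σ (φ i)‖ ≤
      C * ‖WeakDual.toStrongDual (∑ i, c i • ((φ i : WeakDual ℂ A)))‖

/-- The BSE norm: the infimum of admissible constants. -/
noncomputable def bseNorm (σ : WeakDual.characterSpace ℂ A → ℂ) : ℝ :=
  sInf {C : ℝ | 0 < C ∧ ∀ (n : ℕ) (φ : Fin n → WeakDual.characterSpace ℂ A) (c : Fin n → ℂ),
    ‖∑ i, c i * σ (φ i)‖ ≤
      C * ‖WeakDual.toStrongDual (∑ i, c i • ((φ i : WeakDual ℂ A)))‖}

variable (A) in
/-- The space `C_BSE(Δ(A))` of BSE-functions, as a subtype of `C_b(Δ(A))`. -/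
abbrev BSEfun :=
  {σ : BoundedContinuousFunction (WeakDual.characterSpace ℂ A) ℂ // IsBSE (⇑σ)}

/-- A character of `C_BSE(Δ(A))`: a nonzero multiplicative linear functional on the
BSE-functions which is bounded with respect to the BSE norm. -/
def IsBSECharacter (χ : BSEfun A → ℂ) : Prop :=
  (∀ σ τ ρ : BSEfun A, (ρ : BoundedContinuousFunction (WeakDual.characterSpace ℂ A) ℂ) =
      ↑σ + ↑τ → χ ρ = χ σ + χ τ) ∧
  (∀ (c : ℂ) (σ ρ : BSEfun A),
    (ρ : BoundedContinuousFunction (WeakDual.characterSpace ℂ A) ℂ) = c • ↑σ →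
      χ ρ = c * χ σ) ∧
  (∀ σ τ ρ : BSEfun A, (ρ : BoundedContinuousFunction (WeakDual.characterSpace ℂ A) ℂ) =
      ↑σ * ↑τ → χ ρ = χ σ * χ τ) ∧
  (∃ σ : BSEfun A, χ σ ≠ 0) ∧
  (∃ K : ℝ, ∀ σ : BSEfun A,
    ‖χ σ‖ ≤ K * bseNorm (⇑(σ : BoundedContinuousFunction (WeakDual.characterSpace ℂ A) ℂ)))

variable (A) in
/-- The character space `Δ(C_BSE(Δ(A)))`, as a set of functionals carrying the topology of
pointwise (weak-*) convergence. -/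
def bseCharSet : Set (BSEfun A → ℂ) := {χ | IsBSECharacter χ}

/-- The evaluation character `f_φ : C_BSE(Δ(A)) → ℂ`, `f_φ(σ) = σ(φ)`. -/
noncomputable def evalBSE (φ : WeakDual.characterSpace ℂ A) : BSEfun A → ℂ :=
  fun σ => (σ : BoundedContinuousFunction (WeakDual.characterSpace ℂ A) ℂ) φ

variable (A) in
/-- The character space of `A` viewed as a subset of the dual `A*` (weak-* topology). -/
def charSet : Set (WeakDual ℂ A) :=
  Set.range ((↑) : WeakDual.characterSpace ℂ A → WeakDual ℂ A)

/-!
A bounded weak approximate identity `(xᵢ)` makes the constant function `1` a BSE-function, since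
`|∑ cₖ| = lim |∑ cₖ φₖ(xᵢ)| ≤ β ‖∑ cₖ φₖ‖`; the ideal hypothesis then gives
`C_BSE(Δ(A)) = C_b(Δ(A))`. Characters of `A` have norm at most `1`, so every point evaluation
is a character of `C_BSE(Δ(A))` bounded by the BSE norm, and these closed conditions pass to
pointwise limits. Conversely, a character `χ` of `C_b(X)` is a pointwise limit of point
evaluations: if no point `x` had `|fₖ(x) - χ(fₖ)| < εₖ` for finitely many `fₖ`, then
`g = ∑ εₖ⁻² |fₖ - χ(fₖ)|²` would be bounded below by `1`, hence invertible in `C_b(X)`,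
while `χ(g) = 0`.
-/

namespace BoundedContinuousFunction

variable {X : Type*} [TopologicalSpace X]

theorem isUnit_of_forall_le_norm {𝕜 : Type*} [NormedField 𝕜] {g : X →ᵇ 𝕜} {c : ℝ} (hc : 0 < c)
    (hg : ∀ x, c ≤ ‖g x‖) : IsUnit g := by
  have hne (x : X) : g x ≠ 0 := norm_pos_iff.1 (hc.trans_le (hg x))
  let gInv : X →ᵇ 𝕜 := ofNormedAddCommGroup (fun x => (g x)⁻¹) (g.continuous.inv₀ hne) c⁻¹
    fun x => by rw [norm_inv]; exact inv_anti₀ hc (hg x)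
  exact IsUnit.of_mul_eq_one gInv (ext fun x => mul_inv_cancel₀ (hne x))

theorem exists_forall_dist_apply_lt {𝕜 ι : Type*} [RCLike 𝕜] (χ : (X →ᵇ 𝕜) →ₐ[𝕜] 𝕜)
    {s : Set ι} (hs : s.Finite) (f : ι → X →ᵇ 𝕜) {ε : ι → ℝ} (hε : ∀ i ∈ s, 0 < ε i) :
    ∃ x, ∀ i ∈ s, dist (f i x) (χ (f i)) < ε i := by
  by_contra! hfar
  let h (i : ι) : X →ᵇ 𝕜 := f i - algebraMap 𝕜 _ (χ (f i))
  let g : X →ᵇ 𝕜 := ∑ i ∈ hs.toFinset, ((ε i ^ 2)⁻¹ : 𝕜) • (h i * star (h i))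
  have hχg : χ g = 0 := by simp [g, h]
  have hg (x : X) : 1 ≤ ‖g x‖ := by
    have hgx : g x = ((∑ i ∈ hs.toFinset, (ε i ^ 2)⁻¹ * dist (f i x) (χ (f i)) ^ 2 : ℝ) : 𝕜) := by
      simp [g, h, dist_eq_norm, ← map_sub, RCLike.mul_conj, RCLike.algebraMap_eq_ofReal]
    obtain ⟨i, hi, hεi⟩ := hfar x
    calc (1 : ℝ) ≤ (ε i ^ 2)⁻¹ * dist (f i x) (χ (f i)) ^ 2 := by
          rw [le_inv_mul_iff₀ (pow_pos (hε i hi) 2), mul_one]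
          exact pow_le_pow_left₀ (hε i hi).le hεi 2
      _ ≤ ∑ i ∈ hs.toFinset, (ε i ^ 2)⁻¹ * dist (f i x) (χ (f i)) ^ 2 :=
          Finset.single_le_sum (f := fun i => (ε i ^ 2)⁻¹ * dist (f i x) (χ (f i)) ^ 2)
            (fun j _ => by positivity) (hs.mem_toFinset.2 hi)
      _ ≤ ‖g x‖ := by rw [hgx, RCLike.norm_ofReal]; exact le_abs_self _
  exact ((isUnit_of_forall_le_norm one_pos hg).map χ).ne_zero hχg

end BoundedContinuousFunction

namespace WeakDual.CharacterSpace

theorem norm_apply_le (φ : characterSpace ℂ A) (a : A) : ‖φ a‖ ≤ ‖a‖ := by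
  -- The ℓ¹ norm on the unitization, unlike the operator norm, needs no regularity of `A`.
  let ψ : WithLp 1 (Unitization ℂ A) →ₐ[ℂ] ℂ :=
    (Unitization.lift (toNonUnitalAlgHom φ)).comp (WithLp.unitizationAlgEquiv ℂ).toAlgHom
  have hψ := AlgHom.norm_apply_le_self_mul_norm_one ψ (WithLp.toLp 1 (a : Unitization ℂ A))
  have h1 : ‖(1 : WithLp 1 (Unitization ℂ A))‖ = 1 := by
    rw [WithLp.unitization_norm_def]
    exact (congrArg₂ (· + ·) norm_one norm_zero).trans (add_zero 1)
  simpa [ψ, WithLp.unitization_norm_inr, h1] using hψ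

theorem norm_toStrongDual_le_one (φ : characterSpace ℂ A) :
    ‖toStrongDual (φ : WeakDual ℂ A)‖ ≤ 1 :=
  ContinuousLinearMap.opNorm_le_bound _ zero_le_one fun a => by simpa using norm_apply_le φ a

end WeakDual.CharacterSpace

open WeakDual.CharacterSpace BoundedContinuousFunction Topology Set

omit [IsScalarTower ℂ A A] [SMulCommClass ℂ A A] [CompleteSpace A] in
theorem isBSE_one_of_tendsto {ι : Type*} {l : Filter ι} [l.NeBot] {x : ι → A} {β : ℝ}
    (hβ : ∀ i, ‖x i‖ ≤ β) (hx : ∀ φ : characterSpace ℂ A, Tendsto (fun i => φ (x i)) l (𝓝 1)) :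
    IsBSE ⇑(1 : characterSpace ℂ A →ᵇ ℂ) := by
  refine ⟨max β 1, lt_max_of_lt_right one_pos, fun n φ c => ?_⟩
  set F := ∑ i, c i • (φ i : WeakDual ℂ A)
  have hF : Tendsto (fun j => F (x j)) l (𝓝 (∑ i, c i)) := by
    have := tendsto_finsetSum Finset.univ fun i _ => (hx (φ i)).const_mul (c i)
    convert this using 2 with j
    · change toStrongDual F (x j) = _
      simp [F, _root_.sum_apply]
    · simp
  have hbound (j : ι) : ‖F (x j)‖ ≤ max β 1 * ‖toStrongDual F‖ :=
    calc ‖F (x j)‖ ≤ ‖toStrongDual F‖ * ‖x j‖ := (toStrongDual F).le_opNorm (x j)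
      _ ≤ max β 1 * ‖toStrongDual F‖ := by
        rw [mul_comm]; gcongr; exact (hβ j).trans (le_max_left β 1)
  simpa using le_of_tendsto hF.norm (Eventually.of_forall hbound)

theorem norm_apply_le_bseNorm (σ : BSEfun A) (φ : characterSpace ℂ A) :
    ‖σ.1 φ‖ ≤ bseNorm ⇑σ.1 := by
  obtain ⟨C₀, hC₀, hC₀'⟩ := σ.2
  refine le_csInf ⟨C₀, hC₀, hC₀'⟩ fun C ⟨hC, hCσ⟩ => ?_
  calc ‖σ.1 φ‖ ≤ C * ‖toStrongDual (φ : WeakDual ℂ A)‖ := by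
        simpa using hCσ 1 (fun _ => φ) (fun _ => 1)
    _ ≤ C := mul_le_of_le_one_right hC.le (norm_toStrongDual_le_one φ)

omit [IsScalarTower ℂ A A] [SMulCommClass ℂ A A] [CompleteSpace A] in
theorem IsBSECharacter.apply_one {χ : BSEfun A → ℂ} (hχ : IsBSECharacter χ)
    (h1 : IsBSE ⇑(1 : characterSpace ℂ A →ᵇ ℂ)) : χ ⟨1, h1⟩ = 1 := by
  obtain ⟨σ, hσ⟩ := hχ.2.2.2.1
  have := hχ.2.2.1 σ ⟨1, h1⟩ σ (mul_one _).symm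
  exact (mul_right_eq_self₀.1 this.symm).resolve_right hσ

omit [IsScalarTower ℂ A A] [SMulCommClass ℂ A A] [CompleteSpace A] in
noncomputable def IsBSECharacter.toAlgHom {χ : BSEfun A → ℂ} (hχ : IsBSECharacter χ)
    (hall : ∀ f : characterSpace ℂ A →ᵇ ℂ, IsBSE ⇑f) : (characterSpace ℂ A →ᵇ ℂ) →ₐ[ℂ] ℂ where
  toFun f := χ ⟨f, hall f⟩
  map_one' := hχ.apply_one (hall 1)
  map_mul' f g := hχ.2.2.1 _ _ ⟨f * g, hall _⟩ rfl
  map_zero' := by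
    simpa using hχ.2.1 0 ⟨1, hall 1⟩ ⟨0, hall 0⟩ (zero_smul ℂ _).symm
  map_add' f g := hχ.1 _ _ ⟨f + g, hall _⟩ rfl
  commutes' c := by
    simpa [hχ.apply_one (hall 1)] using
      hχ.2.1 c ⟨1, hall 1⟩ ⟨algebraMap ℂ _ c, hall _⟩ (Algebra.algebraMap_eq_smul_one c)

omit [IsScalarTower ℂ A A] [SMulCommClass ℂ A A] [CompleteSpace A] in
theorem IsBSECharacter.mem_closure_range_evalBSE {χ : BSEfun A → ℂ} (hχ : IsBSECharacter χ)
    (hall : ∀ f : characterSpace ℂ A →ᵇ ℂ, IsBSE ⇑f) : χ ∈ closure (range evalBSE) := by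
  have hbasis := Filter.hasBasis_pi fun σ : BSEfun A => Metric.nhds_basis_ball (x := χ σ)
  rw [← nhds_pi] at hbasis
  rw [mem_closure_iff_nhds_basis hbasis]
  rintro ⟨s, ε⟩ ⟨hs, hε⟩
  obtain ⟨φ, hφ⟩ := exists_forall_dist_apply_lt (hχ.toAlgHom hall) hs Subtype.val hε
  exact ⟨evalBSE φ, ⟨φ, rfl⟩, fun σ hσ => hφ σ hσ⟩

theorem isBSECharacter_of_mem_closure (h1 : IsBSE ⇑(1 : characterSpace ℂ A →ᵇ ℂ))
    {χ : BSEfun A → ℂ} (hχ : χ ∈ closure (range evalBSE)) : IsBSECharacter χ := by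
  have hlimit {F G : (BSEfun A → ℂ) → ℂ} (hF : Continuous F) (hG : Continuous G)
      (h : ∀ φ, F (evalBSE φ) = G (evalBSE φ)) : F χ = G χ :=
    EqOn.closure (forall_mem_range.2 h) hF hG hχ
  refine ⟨fun σ τ ρ hρ => hlimit (continuous_apply ρ)
      ((continuous_apply σ).add (continuous_apply τ)) fun φ => ?_,
    fun c σ ρ hρ => hlimit (continuous_apply ρ) (continuous_const.mul (continuous_apply σ))
      fun φ => ?_,
    fun σ τ ρ hρ => hlimit (continuous_apply ρ)
      ((continuous_apply σ).mul (continuous_apply τ)) fun φ => ?_,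
    ⟨⟨1, h1⟩, ?_⟩, 1, fun σ => ?_⟩
  · simp [evalBSE, hρ]
  · simp [evalBSE, hρ]
  · simp [evalBSE, hρ]
  · rw [hlimit (continuous_apply _) continuous_const fun φ => rfl]
    exact one_ne_zero
  · rw [one_mul]
    exact le_on_closure (f := fun χ => ‖χ σ‖)
      (forall_mem_range.2 fun φ => norm_apply_le_bseNorm σ φ) (by fun_prop) continuousOn_const hχ

theorem bseCharSet_eq_closure_general
    (hbwai : ∃ (ι : Type) (P : Preorder ι), Nonempty ι ∧
      IsDirected ι (fun a b => P.le a b) ∧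
      ∃ (x : ι → A) (β : ℝ), (∀ i, ‖x i‖ ≤ β) ∧
        ∀ φ : WeakDual.characterSpace ℂ A,
          Filter.Tendsto (fun i => φ (x i)) (@Filter.atTop ι P) (nhds (1 : ℂ)))
    (hIdeal : ∀ f σ : BoundedContinuousFunction (WeakDual.characterSpace ℂ A) ℂ,
      IsBSE (⇑σ) → IsBSE (⇑(f * σ))) :
    bseCharSet A = closure (Set.range (evalBSE (A := A))) := by
  obtain ⟨ι, P, hne, hdir, x, β, hβ, hx⟩ := hbwai
  let _ : Preorder ι := P
  have : (atTop : Filter ι).NeBot := atTop_neBot_iff.2 ⟨hne, hdir⟩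
  have h1 : IsBSE ⇑(1 : characterSpace ℂ A →ᵇ ℂ) := isBSE_one_of_tendsto hβ hx
  have hall (f : characterSpace ℂ A →ᵇ ℂ) : IsBSE ⇑f := by simpa using hIdeal f 1 h1
  ext χ
  exact ⟨fun hχ => hχ.mem_closure_range_evalBSE hall, isBSECharacter_of_mem_closure h1⟩

/-- if `A` has a bounded weak approximate identity and `C_BSE(Δ(A))` is an
ideal of `C_b(Δ(A))`, then the character space of `C_BSE(Δ(A))` equals the weak-* closure
of `Δ(A)` (embedded via the evaluation characters `f_φ`). -/
theorem bseCharSet_eq_closure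
    (hss : ∀ a : A, (∀ φ : WeakDual.characterSpace ℂ A, φ a = 0) → a = 0)
    (hbwai : ∃ (ι : Type) (P : Preorder ι), Nonempty ι ∧
      IsDirected ι (fun a b => P.le a b) ∧
      ∃ (x : ι → A) (β : ℝ), (∀ i, ‖x i‖ ≤ β) ∧
        ∀ φ : WeakDual.characterSpace ℂ A,
          Filter.Tendsto (fun i => φ (x i)) (@Filter.atTop ι P) (nhds (1 : ℂ)))
    (hIdeal : ∀ f σ : BoundedContinuousFunction (WeakDual.characterSpace ℂ A) ℂ,
      IsBSE (⇑σ) → IsBSE (⇑(f * σ))) :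
    bseCharSet A = closure (Set.range (evalBSE (A := A))) :=
  bseCharSet_eq_closure_general hbwai hIdeal
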